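/- arXiv:1605.07076 — 5 statements merged into one kernel-verified Lean document; each statement's English description precedes it below -/
import Mathlib

section
/- Let E = F[γ] be a finite separable extension of the local field F of degree n and ramification index e, with γ ∈ E^×. Then the invariant c̃_F(γ) = c_F(γ) + (n−1)n_F(γ) satisfies c̃_F(γ) ≥ −(n−1)(e−1). -/
/-- Let `E = F[γ]` be a finite separable extension of the local field `F` of
degree `n` and ramification index `e`, with `γ ∈ E^×`.  Let `c` be the conductor-exponent
invariant (`(𝔬[x] : 𝔬_E) = 𝔭_E^{c x}` for nonzero integral generators `x`, extended to `E^×`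
by `c(z·x) = e(n-1)vF(z) + c x`).  Then the invariant
`c̃_F(γ) = c_F(γ) + (n-1)·n_F(γ)`, with `n_F(γ) = -vE γ`, satisfies
`c̃_F(γ) ≥ -(n-1)(e-1)`. -/
theorem statement3
    (F E : Type*) [Field F] [Field E] [Algebra F E] [FiniteDimensional F E]
    [Algebra.IsSeparable F E]
    (vF : F → ℤ) (vE : E → ℤ)
    (hvFmul : ∀ x y : F, x ≠ 0 → y ≠ 0 → vF (x * y) = vF x + vF y)
    (hvFsurj : ∀ m : ℤ, ∃ x : F, x ≠ 0 ∧ vF x = m)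
    (hvEmul : ∀ x y : E, x ≠ 0 → y ≠ 0 → vE (x * y) = vE x + vE y)
    (hvEsurj : ∀ m : ℤ, ∃ x : E, x ≠ 0 ∧ vE x = m)
    (e : ℤ) (he1 : 1 ≤ e)
    (hcompat : ∀ x : F, x ≠ 0 → vE (algebraMap F E x) = e * vF x)
    (c : E → ℤ)
    -- the conductor characterization of `c x` for nonzero integral generators `x`:
    (hcond : ∀ x : E, x ≠ 0 → 0 ≤ vE x → Algebra.adjoin F ({x} : Set E) = ⊤ →
      ∀ t : E, t ≠ 0 →
        ((0 ≤ vE t ∧ ∀ y : E, (y = 0 ∨ 0 ≤ vE y) →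
            t * y ∈ Subring.closure
              ({w : E | ∃ a : F, (a = 0 ∨ 0 ≤ vF a) ∧ algebraMap F E a = w} ∪ {x}))
          ↔ c x ≤ vE t))
    -- the scaling identity defining `c` on all of `E^×`:
    (hscale : ∀ z : F, z ≠ 0 → ∀ x : E, x ≠ 0 →
      c (algebraMap F E z * x) = e * ((Module.finrank F E : ℤ) - 1) * vF z + c x)
    (γ : E) (hγ0 : γ ≠ 0) (hγgen : Algebra.adjoin F ({γ} : Set E) = ⊤) :
    -(((Module.finrank F E : ℤ) - 1) * (e - 1))
      ≤ c γ + ((Module.finrank F E : ℤ) - 1) * (-(vE γ)) := by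
  have he0 : (0:ℤ) < e := he1
  obtain ⟨z, hz0, hzv⟩ := hvFsurj (-(vE γ / e))
  have hz0' : algebraMap F E z ≠ 0 := fun h => hz0 ((algebraMap F E).injective (by simpa using h))
  set x := algebraMap F E z * γ with hx
  have hx0 : x ≠ 0 := mul_ne_zero hz0' hγ0
  have hvx : vE x = vE γ % e := by
    rw [hvEmul _ _ hz0' hγ0, hcompat z hz0, hzv, Int.emod_def]; ring
  have hvx0 : 0 ≤ vE x := hvx ▸ Int.emod_nonneg _ (ne_of_gt he0)
  have hvxlt : vE x ≤ e - 1 := by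
    have := Int.emod_lt_of_pos (vE γ) he0; omega
  have hgen : Algebra.adjoin F ({x} : Set E) = ⊤ := by
    rw [eq_top_iff, ← hγgen]
    apply Algebra.adjoin_le
    rw [Set.singleton_subset_iff]
    have hxmem : x ∈ Algebra.adjoin F ({x} : Set E) := Algebra.subset_adjoin rfl
    have hγeq : γ = algebraMap F E z⁻¹ * x := by
      rw [hx, map_inv₀, ← mul_assoc, inv_mul_cancel₀ hz0', one_mul]
    show γ ∈ _
    rw [hγeq]
    exact mul_mem (Subalgebra.algebraMap_mem _ _) hxmem
  have hcx0 : 0 ≤ c x := by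
    obtain ⟨t, ht0, htv⟩ := hvEsurj (c x)
    have := ((hcond x hx0 hvx0 hgen t ht0).mpr (le_of_eq htv.symm)).1
    omega
  have hsc := hscale z hz0 γ hγ0
  rw [hzv] at hsc
  rw [← hx] at hsc
  have hn : 0 < Module.finrank F E := Module.finrank_pos
  have hn1 : (0:ℤ) ≤ (Module.finrank F E : ℤ) - 1 := by
    have : (1:ℤ) ≤ (Module.finrank F E : ℤ) := by exact_mod_cast hn
    omega
  have hemod : vE γ % e = vE γ - e * (vE γ / e) := Int.emod_def _ _
  set n1 : ℤ := (Module.finrank F E : ℤ) - 1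
  have key : c γ + n1 * (-(vE γ)) = c x + n1 * (-(vE x)) := by
    rw [hvx, hemod, hsc]; ring
  rw [key]
  nlinarith [mul_nonneg hn1 hvx0, mul_le_mul_of_nonneg_left hvxlt hn1]
end

section
/- Let E = F[γ] be a finite field extension of the local field F of degree n > 1, with γ ∈ E^×. Then D_F(γ) = det_F(1 − Ad_γ ; End_F(E)/E) is nonzero if and only if the extension E/F is separable. -/
open Polynomial


/-- The conjugation operator `Ad_γ : u ↦ (lmul γ) ∘ u ∘ (lmul γ⁻¹)` on `A(E) = End_F(E)`. -/
noncomputable def adConj (F E : Type*) [Field F] [Field E] [Algebra F E] (γ : E) :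
    Module.End F E →ₗ[F] Module.End F E :=
  (LinearMap.mulLeft F (Algebra.lmul F E γ)).comp
    (LinearMap.mulRight F (Algebra.lmul F E γ⁻¹))

/-- The subspace `E ⊆ A(E) = End_F(E)` of multiplication operators. -/
noncomputable def lmulRange (F E : Type*) [Field F] [Field E] [Algebra F E] :
    Submodule F (Module.End F E) :=
  LinearMap.range (Algebra.lmul F E).toLinearMap

/-- Chain rule for a "derivation at γ". -/
lemma chainRuleAux {F E : Type*} [Field F] [Field E] [Algebra F E]
    (γ d : E) (D : E →ₗ[F] E) (h1 : D 1 = 0)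
    (hrel : ∀ x, D (γ * x) = γ * D x + d * x) (g : F[X]) :
    D (aeval γ g) = aeval γ (derivative g) * d := by
  induction g using Polynomial.induction_on with
  | C a =>
      simp only [aeval_C, derivative_C, map_zero, zero_mul]
      have : (algebraMap F E) a = a • (1 : E) := by
        rw [Algebra.smul_def, mul_one]
      rw [this, map_smul, h1, smul_zero]
  | add p q hp hq =>
      simp [hp, hq, add_mul]
  | monomial n a ih =>
      have hx : aeval γ (C a * X ^ (n + 1)) = γ * aeval γ (C a * X ^ n) := by
        simp [pow_succ]; ring
      rw [hx, hrel, ih]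
      rw [derivative_C_mul_X_pow, derivative_C_mul_X_pow]
      rcases n with _ | m
      · simp [mul_comm]
      · simp only [Nat.add_sub_cancel, Nat.succ_sub_one, map_mul, aeval_C, map_pow, aeval_X,
          map_natCast]
        push_cast
        rw [pow_succ]
        ring

/-- Pointwise formula for `(1 - Ad_γ) u`. -/
lemma sub_adConj_apply {F E : Type*} [Field F] [Field E] [Algebra F E] (γ : E)
    (u : Module.End F E) (x : E) :
    (((LinearMap.id : Module.End F E →ₗ[F] Module.End F E) - adConj F E γ) u) x
      = u x - γ * u (γ⁻¹ * x) := by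
  simp [adConj, LinearMap.sub_apply, Module.End.mul_apply, LinearMap.mulLeft_apply,
    LinearMap.mulRight_apply, LinearMap.mul_apply']

/-- Let `E = F[γ]` be a finite extension of the local field `F` of degree
`n > 1`, with `γ ∈ E^×`.  Then `D_F(γ) = det_F(1 - Ad_γ ; End_F(E)/E)` is nonzero if and
only if the extension `E/F` is separable. -/
theorem statement7
    (F E : Type*) [Field F] [Field E] [Algebra F E] [FiniteDimensional F E]
    (hn : 1 < Module.finrank F E)
    (γ : E) (hγ0 : γ ≠ 0) (hγgen : Algebra.adjoin F ({γ} : Set E) = ⊤)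
    (h₁ : lmulRange F E ≤ (lmulRange F E).comap
      ((LinearMap.id : Module.End F E →ₗ[F] Module.End F E) - adConj F E γ)) :
    LinearMap.det (Submodule.mapQ (lmulRange F E) (lmulRange F E)
        ((LinearMap.id : Module.End F E →ₗ[F] Module.End F E) - adConj F E γ) h₁) ≠ 0
      ↔ Algebra.IsSeparable F E := by
  classical
  have hint : IsIntegral F γ := IsIntegral.of_finite F γ
  set T := Submodule.mapQ (lmulRange F E) (lmulRange F E)
      ((LinearMap.id : Module.End F E →ₗ[F] Module.End F E) - adConj F E γ) h₁ with hT
  have hdet0 : LinearMap.det T = 0 ↔ ∃ m, m ≠ 0 ∧ T m = 0 :=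
    (LinearMap.hasEigenvalue_zero_tfae T).out 3 5
  have hsurj : ∀ x : E, ∃ g : F[X], aeval γ g = x := by
    intro x
    have hx : x ∈ (Polynomial.aeval γ : F[X] →ₐ[F] E).range := by
      rw [← Algebra.adjoin_singleton_eq_range_aeval, hγgen]; trivial
    exact hx
  constructor
  · -- det ≠ 0 → separable
    intro hdet
    by_contra hsep
    -- γ is not separable, so the minimal polynomial has zero derivative
    have hder : derivative (minpoly F γ) = 0 := by
      by_contra h
      apply hsep
      have hsepγ : IsSeparable F γ :=
        (Polynomial.separable_iff_derivative_ne_zero (minpoly.irreducible hint)).2 h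
      have htop : IntermediateField.adjoin F ({γ} : Set E) = ⊤ :=
        IntermediateField.adjoin_eq_top_of_algebra F {γ} hγgen
      have := (IntermediateField.isSeparable_adjoin_simple_iff_isSeparable F E).2 hsepγ
      exact AlgEquiv.Algebra.isSeparable
        ((IntermediateField.equivOfEq htop).trans IntermediateField.topEquiv)
    -- construct the derivation D
    set φ : F[X] →ₗ[F] E := (Polynomial.aeval γ : F[X] →ₐ[F] E).toLinearMap with hφ
    have hφsurj : Function.Surjective φ := hsurj
    have hker : LinearMap.ker φ ≤ LinearMap.ker (φ ∘ₗ (derivative : F[X] →ₗ[F] F[X])) := by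
      intro g hg
      simp only [LinearMap.mem_ker, hφ, AlgHom.toLinearMap_apply] at hg ⊢
      obtain ⟨h, rfl⟩ := minpoly.dvd F γ hg
      simp only [LinearMap.coe_comp, Function.comp_apply, derivative_mul, hder, zero_mul,
        zero_add, map_add, map_mul, minpoly.aeval, zero_mul, AlgHom.toLinearMap_apply]
    set D : E →ₗ[F] E :=
      (Submodule.liftQ (LinearMap.ker φ) (φ ∘ₗ (derivative : F[X] →ₗ[F] F[X])) hker).comp
        (φ.quotKerEquivOfSurjective hφsurj).symm.toLinearMap with hD
    have hkey : ∀ g : F[X], D (aeval γ g) = aeval γ (derivative g) := by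
      intro g
      have h1 : (φ.quotKerEquivOfSurjective hφsurj).symm (φ g) = Submodule.Quotient.mk g := by
        rw [LinearEquiv.symm_apply_eq]
        rfl
      have h2 : D (φ g) = (φ ∘ₗ (derivative : F[X] →ₗ[F] F[X])) g := by
        rw [hD]
        simp only [LinearMap.coe_comp, Function.comp_apply, LinearEquiv.coe_toLinearMap]
        rw [h1, Submodule.liftQ_apply]
        rfl
      simpa [hφ] using h2
    have hrel : ∀ x, D (γ * x) = γ * D x + 1 * x := by
      intro x
      obtain ⟨g, rfl⟩ := hsurj x
      have : γ * aeval γ g = aeval γ (X * g) := by simp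
      rw [this, hkey, hkey]
      simp [derivative_mul, add_mul, mul_comm, add_comm]
    have hD1 : D 1 = 0 := by
      have := hkey 1
      simpa using this
    have hDγ : D γ = 1 := by
      have := hkey X
      simpa using this
    -- D is not a multiplication operator
    have hDnot : D ∉ lmulRange F E := by
      rintro ⟨c, hc⟩
      have h1 : c * 1 = D 1 := by
        rw [← hc]; simp
      rw [mul_one, hD1] at h1
      have h2 : c * γ = D γ := by
        rw [← hc]; simp
      rw [hDγ, h1, zero_mul] at h2
      exact one_ne_zero h2.symm
    -- (1 - Ad_γ) D = lmul γ⁻¹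
    have hfD : (((LinearMap.id : Module.End F E →ₗ[F] Module.End F E) - adConj F E γ) D)
        ∈ lmulRange F E := by
      refine ⟨γ⁻¹, ?_⟩
      ext x
      rw [AlgHom.toLinearMap_apply]
      rw [sub_adConj_apply]
      have := hrel (γ⁻¹ * x)
      rw [← mul_assoc, mul_inv_cancel₀ hγ0, one_mul, one_mul] at this
      simp only [Algebra.coe_lmul_eq_mul, LinearMap.mul_apply']
      rw [this]
      ring
    apply hdet
    rw [hdet0]
    refine ⟨Submodule.Quotient.mk D, ?_, ?_⟩
    · simpa [Submodule.Quotient.mk_eq_zero] using hDnot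
    · rw [hT, Submodule.mapQ_apply, Submodule.Quotient.mk_eq_zero]
      exact hfD
  · -- separable → det ≠ 0
    intro hsep hdet
    obtain ⟨m, hm0, hm⟩ := hdet0.1 hdet
    obtain ⟨u, rfl⟩ := Submodule.Quotient.mk_surjective _ m
    rw [hT, Submodule.mapQ_apply, Submodule.Quotient.mk_eq_zero] at hm
    obtain ⟨c, hc⟩ := hm
    have hpt : ∀ x, u x - γ * u (γ⁻¹ * x) = c * x := by
      intro x
      have := congrFun (congrArg (fun (v : Module.End F E) => (v : E → E)) hc) x
      simp only [AlgHom.toLinearMap_apply, Algebra.coe_lmul_eq_mul, LinearMap.mul_apply'] at this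
      rw [sub_adConj_apply] at this
      exact this.symm
    set D : E →ₗ[F] E := u - (Algebra.lmul F E (u 1)) with hD
    have hrel : ∀ x, D (γ * x) = γ * D x + (c * γ) * x := by
      intro x
      have h := hpt (γ * x)
      rw [← mul_assoc, inv_mul_cancel₀ hγ0, one_mul] at h
      have : u (γ * x) = γ * u x + c * (γ * x) := by linear_combination h
      simp only [hD, LinearMap.sub_apply, Algebra.coe_lmul_eq_mul, LinearMap.mul_apply']
      rw [this]
      ring
    have hD1 : D 1 = 0 := by
      simp [hD]
    have hchain := fun g => chainRuleAux γ (c * γ) D hD1 hrel g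
    -- derivative of minpoly doesn't vanish at γ
    have hfne : minpoly F γ ≠ 0 := minpoly.ne_zero hint
    have hsepγ : (minpoly F γ).Separable := Algebra.IsSeparable.isSeparable F γ
    have hd'ne : derivative (minpoly F γ) ≠ 0 := by
      intro h
      rw [Polynomial.Separable, h] at hsepγ
      exact minpoly.not_isUnit F γ (isCoprime_zero_right.mp hsepγ)
    have haevald : aeval γ (derivative (minpoly F γ)) ≠ 0 := by
      intro h
      have hdvd := minpoly.dvd F γ h
      have := Polynomial.degree_le_of_dvd hdvd hd'ne
      exact absurd this (not_le.2 (Polynomial.degree_derivative_lt hfne))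
    have hcγ : c * γ = 0 := by
      have := hchain (minpoly F γ)
      rw [minpoly.aeval, map_zero] at this
      exact (mul_eq_zero.mp this.symm).resolve_left haevald
    have hDzero : D = 0 := by
      ext x
      obtain ⟨g, rfl⟩ := hsurj x
      rw [LinearMap.zero_apply, hchain, hcγ, mul_zero]
    have : u ∈ lmulRange F E := by
      refine ⟨u 1, ?_⟩
      have := sub_eq_zero.mp hDzero
      exact this.symm
    exact hm0 (by rwa [Submodule.Quotient.mk_eq_zero])
end

section
/- Let E = F[β] be a finite separable extension of the field F of degree n, with β ∈ E^×, and let A(E) = End_F(E). Then A(E) = ad_β(A(E)) ⊕ E, where ad_β(u) = βu − uβ and E ⊂ A(E) is the subalgebra of multiplication operators. -/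
/-!
Write `L_c` for multiplication by `c ∈ E` and `ad = [L_β, ·]` on `A(E) = End_F(E)`.
An endomorphism `u` commuting with `L_β` commutes with all of `F[L_β] = L(E)`, hence is `L_{u 1}`;
so `ker ad = L(E)`, and by rank–nullity it suffices that `range ad ∩ L(E) = 0`.
Since `L_x` commutes with `L_β`, `tr([L_β, u] L_x) = 0` by cyclicity of the trace, so an element
`L_c` of `range ad` satisfies `Tr_{E/F}(c x) = 0` for all `x`, and `c = 0` because the trace form
of a separable extension is nondegenerate.
-/

open LinearMap

theorem LinearMap.isCompl_range_ker_of_disjoint {K V : Type*} [Field K] [AddCommGroup V]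
    [Module K V] [FiniteDimensional K V] (f : V →ₗ[K] V)
    (h : Disjoint (range f) (ker f)) : IsCompl (range f) (ker f) :=
  (Submodule.isCompl_iff_disjoint _ _ (finrank_range_add_finrank_ker f).ge).mpr h

theorem LinearMap.trace_commutator_mul_eq_zero_of_commute {R M : Type*} [CommRing R]
    [AddCommGroup M] [Module R M] {f h : Module.End R M} (hfh : Commute f h)
    (g : Module.End R M) : trace R M ((f * g - g * f) * h) = 0 := by
  rw [sub_mul, mul_assoc, mul_assoc, hfh.eq, map_sub, trace_mul_comm R f, mul_assoc, sub_self]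

theorem Subalgebra.mem_centralizer_singleton_iff {R A : Type*} [CommSemiring R] [Semiring A]
    [Algebra R A] {a z : A} : z ∈ Subalgebra.centralizer R {a} ↔ Commute a z := by
  simp [Subalgebra.mem_centralizer_iff, Commute, SemiconjBy]

theorem LinearMap.ker_mulLeft_sub_mulRight {R A : Type*} [CommRing R] [Ring A] [Algebra R A]
    (a : A) :
    ker (mulLeft R a - mulRight R a) = Subalgebra.toSubmodule (Subalgebra.centralizer R {a}) := by
  ext u
  simp [Subalgebra.mem_centralizer_singleton_iff, Commute, SemiconjBy, sub_eq_zero]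

namespace Algebra

variable {R A : Type*} [CommSemiring R] [CommSemiring A] [Algebra R A]

theorem commute_lmul (a b : A) : Commute (lmul R A a) (lmul R A b) := by
  rw [Commute, SemiconjBy, ← map_mul, mul_comm, map_mul]

theorem mem_range_lmul_of_forall_commute {u : Module.End R A}
    (hu : ∀ a, Commute (lmul R A a) u) : u ∈ (lmul R A).range := by
  refine ⟨u 1, LinearMap.ext fun x => ?_⟩
  simpa [mul_comm] using LinearMap.congr_fun (hu x) 1

theorem centralizer_lmul_eq_range_lmul {β : A} (hβ : adjoin R {β} = ⊤) :
    Subalgebra.centralizer R {lmul R A β} = (lmul R A).range := by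
  apply le_antisymm
  · intro u hu
    rw [Subalgebra.mem_centralizer_singleton_iff] at hu
    have hrange : (lmul R A).range ≤ Subalgebra.centralizer R {u} := by
      rw [← map_top, ← hβ, AlgHom.map_adjoin, Set.image_singleton, adjoin_le_iff,
        Set.singleton_subset_iff, SetLike.mem_coe, Subalgebra.mem_centralizer_singleton_iff]
      exact hu.symm
    exact mem_range_lmul_of_forall_commute fun a =>
      (Subalgebra.mem_centralizer_singleton_iff.mp (hrange ⟨a, rfl⟩)).symm
  · rintro _ ⟨a, rfl⟩
    exact Subalgebra.mem_centralizer_singleton_iff.mpr (commute_lmul β a)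

end Algebra

theorem Algebra.disjoint_range_ad_lmul_range_lmul {K A : Type*} [Field K] [CommRing A] [Algebra K A]
    (hA : (traceForm K A).Nondegenerate) (β : A) :
    Disjoint (range (mulLeft K (lmul K A β) - mulRight K (lmul K A β)))
      (range (lmul K A).toLinearMap) := by
  rw [Submodule.disjoint_def]
  rintro _ ⟨u, rfl⟩ ⟨c, hc⟩
  have hc0 : c = 0 := hA.1 c fun x => by
    have hcx : lmul K A (c * x) = (lmul K A β * u - u * lmul K A β) * lmul K A x := by
      rw [map_mul]
      exact congrArg (· * _) hc
    rw [traceForm_apply, trace_apply, hcx]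
    exact trace_commutator_mul_eq_zero_of_commute (commute_lmul β x) u
  rw [← hc, hc0, map_zero]

theorem statement14_general
    (F E : Type*) [Field F] [Field E] [Algebra F E] [FiniteDimensional F E]
    [Algebra.IsSeparable F E]
    (β : E) (hβgen : Algebra.adjoin F ({β} : Set E) = ⊤) :
    IsCompl
      (LinearMap.range
        (LinearMap.mulLeft F (Algebra.lmul F E β) - LinearMap.mulRight F (Algebra.lmul F E β)))
      (LinearMap.range (Algebra.lmul F E).toLinearMap) := by
  have hker : ker (mulLeft F (Algebra.lmul F E β) - mulRight F (Algebra.lmul F E β)) =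
      range (Algebra.lmul F E).toLinearMap := by
    rw [ker_mulLeft_sub_mulRight, Algebra.centralizer_lmul_eq_range_lmul hβgen]
    rfl
  rw [← hker]
  refine isCompl_range_ker_of_disjoint _ ?_
  rw [hker]
  exact Algebra.disjoint_range_ad_lmul_range_lmul (traceForm_nondegenerate F E) β

/-- Let `E = F[β]` be a finite separable field extension of `F` of degree
`n`, with `β ∈ E^×`, and let `A(E) = End_F(E)`.  Then `A(E) = ad_β(A(E)) ⊕ E`, where
`ad_β(u) = βu - uβ` (with `β` acting as the multiplication operator `lmul β`) and
`E ⊆ A(E)` is the subalgebra of multiplication operators (the range of `lmul`). -/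
theorem statement14
    (F E : Type*) [Field F] [Field E] [Algebra F E] [FiniteDimensional F E]
    [Algebra.IsSeparable F E]
    (β : E) (hβ0 : β ≠ 0) (hβgen : Algebra.adjoin F ({β} : Set E) = ⊤) :
    IsCompl
      (LinearMap.range
        (LinearMap.mulLeft F (Algebra.lmul F E β) - LinearMap.mulRight F (Algebra.lmul F E β)))
      (LinearMap.range (Algebra.lmul F E).toLinearMap) :=
  statement14_general F E β hβgen
end

section
/- Let F be a nonarchimedean local field with integers 𝔬, maximal ideal 𝔭 = (ϖ), residue cardinality q. Let 𝔄_min ⊂ M_N(𝔬) be the standard Iwahori order (matrices that are upper triangular modulo 𝔭) and 𝔓_min its Jacobson radical (matrices strictly upper triangular modulo 𝔭). Then for every k ∈ ℤ, the set of determinants {det(γ) : γ ∈ 𝔓_min^k} equals 𝔭^k = ϖ^k𝔬. -/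
/-!
A matrix `γ` lies in `𝔓_min^k` iff `k + i - j ≤ N · v(γᵢⱼ)` for every nonzero entry. Along the
support of a permutation `σ` the left-hand sides `k + σ i - i` add up to `N k`, so every term
`sign σ · ∏ᵢ γ_{σ i, i}` of the determinant has valuation at least `k`, and by the ultrametric
inequality so has `det γ`.

Conversely, for the rotation `σ` by `-k` every `k + σ i - i` is divisible by `N`, so the
monomial matrix supported on `σ` with entries of valuation exactly `(k + σ i - i) / N` lies in
`𝔓_min^k` and its determinant has valuation exactly `k`. Scaling one of its rows by an integral
element reaches every element of `𝔭^k`.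
-/

open Matrix

section Valuation

variable {F : Type*} [Field F] {vF : F → ℤ}

def valIdeal (vF : F → ℤ) (k : ℤ) : Set F := {x | x = 0 ∨ k ≤ vF x}

theorem val_one (hmul : ∀ x y : F, x ≠ 0 → y ≠ 0 → vF (x * y) = vF x + vF y) : vF 1 = 0 := by
  have h := hmul 1 1 one_ne_zero one_ne_zero
  rw [one_mul] at h
  omega

theorem val_intCast_unit (hmul : ∀ x y : F, x ≠ 0 → y ≠ 0 → vF (x * y) = vF x + vF y)
    (u : ℤˣ) : vF ((u : ℤ) : F) = 0 := by
  rcases Int.units_eq_one_or u with rfl | rfl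
  · simpa using val_one hmul
  · have h := hmul (-1) (-1) (by simp) (by simp)
    rw [neg_mul_neg, one_mul, val_one hmul] at h
    simp only [Units.val_neg, Units.val_one, Int.cast_neg, Int.cast_one]
    omega

theorem val_div (hmul : ∀ x y : F, x ≠ 0 → y ≠ 0 → vF (x * y) = vF x + vF y)
    {x y : F} (hx : x ≠ 0) (hy : y ≠ 0) : vF (x / y) = vF x - vF y := by
  have h := hmul (x / y) y (div_ne_zero hx hy) hy
  rw [div_mul_cancel₀ x hy] at h
  omega

theorem val_prod (hmul : ∀ x y : F, x ≠ 0 → y ≠ 0 → vF (x * y) = vF x + vF y)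
    {ι : Type*} (s : Finset ι) (f : ι → F) (hf : ∀ i ∈ s, f i ≠ 0) :
    vF (∏ i ∈ s, f i) = ∑ i ∈ s, vF (f i) := by
  induction s using Finset.cons_induction with
  | empty => simpa using val_one hmul
  | cons a s _ ih =>
    rw [Finset.forall_mem_cons] at hf
    rw [Finset.prod_cons, Finset.sum_cons, hmul _ _ hf.1 (Finset.prod_ne_zero_iff.mpr hf.2),
      ih hf.2]

theorem add_mem_valIdeal
    (hadd : ∀ x y : F, x ≠ 0 → y ≠ 0 → x + y ≠ 0 → min (vF x) (vF y) ≤ vF (x + y))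
    {k : ℤ} {x y : F} (hx : x ∈ valIdeal vF k) (hy : y ∈ valIdeal vF k) :
    x + y ∈ valIdeal vF k := by
  by_cases hx0 : x = 0
  · simpa [hx0] using hy
  by_cases hy0 : y = 0
  · simpa [hy0] using hx
  by_cases hxy : x + y = 0
  · exact Or.inl hxy
  exact Or.inr
    ((le_min (hx.resolve_left hx0) (hy.resolve_left hy0)).trans (hadd x y hx0 hy0 hxy))

theorem sum_mem_valIdeal
    (hadd : ∀ x y : F, x ≠ 0 → y ≠ 0 → x + y ≠ 0 → min (vF x) (vF y) ≤ vF (x + y))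
    {k : ℤ} {ι : Type*} (s : Finset ι) (f : ι → F) (hf : ∀ i ∈ s, f i ∈ valIdeal vF k) :
    ∑ i ∈ s, f i ∈ valIdeal vF k :=
  Finset.sum_induction f _ (fun _ _ => add_mem_valIdeal hadd) (Or.inl rfl) hf

end Valuation

theorem sum_add_apply_perm_sub {ι : Type*} [Fintype ι] (σ : Equiv.Perm ι) (f : ι → ℤ) (k : ℤ) :
    ∑ i, (k + f (σ i) - f i) = Fintype.card ι * k := by
  simp [Finset.sum_sub_distrib, Finset.sum_add_distrib, Equiv.sum_comp σ f]

open scoped Fin.IntCast in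
theorem exists_perm_fin_dvd (N : ℕ) [NeZero N] (k : ℤ) :
    ∃ σ : Equiv.Perm (Fin N), ∀ i, (N : ℤ) ∣ k + (σ i : ℤ) - i := by
  refine ⟨Equiv.addRight ((-k : ℤ) : Fin N), fun i => ?_⟩
  have hN : (N : ℤ) ≠ 0 := by exact_mod_cast NeZero.ne N
  have hσ : ((i : ℤ) + (-k) % N) % N ≡ i - k [ZMOD N] :=
    (Int.mod_modEq _ _).trans ((Int.ModEq.refl _).add (Int.mod_modEq _ _))
  rw [Equiv.coe_addRight, Fin.val_add, Fin.val_intCast]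
  push_cast
  rw [Int.toNat_of_nonneg (Int.emod_nonneg _ hN)]
  simpa [sub_sub_eq_add_sub, add_comm] using hσ.symm.dvd

section IwahoriRadical

variable {F : Type*} [Field F] {vF : F → ℤ} {N : ℕ}

def iwahoriRadicalPow (vF : F → ℤ) (N : ℕ) (k : ℤ) : Set (Matrix (Fin N) (Fin N) F) :=
  {γ | ∀ i j, γ i j = 0 ∨ k + (i : ℤ) - (j : ℤ) ≤ (N : ℤ) * vF (γ i j)}

theorem le_sum_val_of_mem_iwahoriRadicalPow [NeZero N] {k : ℤ} {γ : Matrix (Fin N) (Fin N) F}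
    (hγ : γ ∈ iwahoriRadicalPow vF N k) (σ : Equiv.Perm (Fin N)) (hσ : ∀ i, γ (σ i) i ≠ 0) :
    k ≤ ∑ i, vF (γ (σ i) i) := by
  have hN : (0 : ℤ) < N := by exact_mod_cast Nat.pos_of_neZero N
  refine le_of_mul_le_mul_left ?_ hN
  calc (N : ℤ) * k = ∑ i, (k + (σ i : ℤ) - i) := by
        simpa using (sum_add_apply_perm_sub σ (fun i : Fin N => (i : ℤ)) k).symm
    _ ≤ ∑ i, (N : ℤ) * vF (γ (σ i) i) :=
        Finset.sum_le_sum fun i _ => (hγ (σ i) i).resolve_left (hσ i)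
    _ = N * ∑ i, vF (γ (σ i) i) := (Finset.mul_sum _ _ _).symm

theorem det_mem_valIdeal [NeZero N]
    (hmul : ∀ x y : F, x ≠ 0 → y ≠ 0 → vF (x * y) = vF x + vF y)
    (hadd : ∀ x y : F, x ≠ 0 → y ≠ 0 → x + y ≠ 0 → min (vF x) (vF y) ≤ vF (x + y))
    {k : ℤ} {γ : Matrix (Fin N) (Fin N) F} (hγ : γ ∈ iwahoriRadicalPow vF N k) :
    γ.det ∈ valIdeal vF k := by
  rw [det_apply']
  refine sum_mem_valIdeal hadd _ _ fun σ _ => ?_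
  rcases em (∃ i, γ (σ i) i = 0) with ⟨i, hi⟩ | hσ
  · exact Or.inl (mul_eq_zero_of_right _ (Finset.prod_eq_zero (Finset.mem_univ i) hi))
  have hσ : ∀ i, γ (σ i) i ≠ 0 := fun i hi => hσ ⟨i, hi⟩
  have hsign : ((Equiv.Perm.sign σ : ℤ) : F) ≠ 0 :=
    ((Equiv.Perm.sign σ).isUnit.map (Int.castRingHom F)).ne_zero
  right
  rw [hmul _ _ hsign (Finset.prod_ne_zero_iff.mpr fun i _ => hσ i), val_intCast_unit hmul,
    zero_add, val_prod hmul _ _ fun i _ => hσ i]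
  exact le_sum_val_of_mem_iwahoriRadicalPow hγ σ hσ

theorem updateRow_smul_mem_iwahoriRadicalPow
    (hmul : ∀ x y : F, x ≠ 0 → y ≠ 0 → vF (x * y) = vF x + vF y)
    {k : ℤ} {γ : Matrix (Fin N) (Fin N) F} (hγ : γ ∈ iwahoriRadicalPow vF N k) (r : Fin N)
    {s : F} (hs : s ∈ valIdeal vF 0) : γ.updateRow r (s • γ r) ∈ iwahoriRadicalPow vF N k := by
  intro i j
  by_cases hi : i = r
  · subst hi
    rw [updateRow_self, Pi.smul_apply, smul_eq_mul]
    by_cases hs0 : s = 0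
    · simp [hs0]
    by_cases hγ0 : γ i j = 0
    · simp [hγ0]
    right
    rw [hmul _ _ hs0 hγ0, mul_add]
    linarith [(hγ i j).resolve_left hγ0, mul_nonneg (Int.natCast_nonneg N) (hs.resolve_left hs0)]
  · rw [updateRow_ne hi]
    exact hγ i j

theorem exists_mem_iwahoriRadicalPow_val_det_eq [NeZero N]
    (hmul : ∀ x y : F, x ≠ 0 → y ≠ 0 → vF (x * y) = vF x + vF y)
    (hsurj : ∀ m : ℤ, ∃ x : F, x ≠ 0 ∧ vF x = m) (k : ℤ) :
    ∃ γ ∈ iwahoriRadicalPow vF N k, γ.det ≠ 0 ∧ vF γ.det = k := by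
  obtain ⟨σ, hσ⟩ := exists_perm_fin_dvd N k
  choose w hw0 hw using hsurj
  set t : Fin N → ℤ := fun i => (k + (σ i : ℤ) - i) / N
  have ht : ∀ i, (N : ℤ) * t i = k + (σ i : ℤ) - i := fun i => Int.mul_ediv_cancel' (hσ i)
  have hsum : ∑ i, t i = k := by
    refine mul_left_cancel₀ (show (N : ℤ) ≠ 0 by exact_mod_cast NeZero.ne N) ?_
    rw [Finset.mul_sum]
    simpa [ht] using sum_add_apply_perm_sub σ (fun i : Fin N => (i : ℤ)) k
  -- the monomial matrix with entry `w (t i)` at position `(σ i, i)`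
  refine ⟨(diagonal fun i => w (t i)).submatrix σ.symm id, ?_, ?_⟩
  · intro r j
    obtain ⟨i, rfl⟩ := σ.surjective r
    by_cases hij : i = j
    · subst hij
      simp [hw, ht]
    · simp [diagonal_apply_ne _ hij]
  · rw [det_permute, det_diagonal]
    have hsign : ((Equiv.Perm.sign σ.symm : ℤ) : F) ≠ 0 :=
      ((Equiv.Perm.sign σ.symm).isUnit.map (Int.castRingHom F)).ne_zero
    have hprod : ∏ i, w (t i) ≠ 0 := Finset.prod_ne_zero_iff.mpr fun i _ => hw0 (t i)
    refine ⟨mul_ne_zero hsign hprod, ?_⟩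
    rw [hmul _ _ hsign hprod, val_intCast_unit hmul, val_prod hmul _ _ fun i _ => hw0 (t i)]
    simp [hw, hsum]

theorem valIdeal_subset_image_det [NeZero N]
    (hmul : ∀ x y : F, x ≠ 0 → y ≠ 0 → vF (x * y) = vF x + vF y)
    (hsurj : ∀ m : ℤ, ∃ x : F, x ≠ 0 ∧ vF x = m) (k : ℤ) :
    valIdeal vF k ⊆ det '' iwahoriRadicalPow vF N k := by
  obtain ⟨γ, hγ, hdet0, hdet⟩ := exists_mem_iwahoriRadicalPow_val_det_eq (N := N) hmul hsurj k
  rintro x hx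
  have hs : x / γ.det ∈ valIdeal vF 0 := by
    by_cases hx0 : x = 0
    · simp [valIdeal, hx0]
    right
    rw [val_div hmul hx0 hdet0]
    linarith [hx.resolve_left hx0]
  refine ⟨γ.updateRow 0 ((x / γ.det) • γ 0), updateRow_smul_mem_iwahoriRadicalPow hmul hγ 0 hs, ?_⟩
  rw [det_updateRow_smul, updateRow_eq_self, div_mul_cancel₀ x hdet0]

end IwahoriRadical

/-- Let `F` be a nonarchimedean local field with normalized valuation `vF`,
ring of integers `𝔬` and maximal ideal `𝔭`.  Let `𝔄_min ⊆ M_N(𝔬)` be the standard Iwahori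
order and `𝔓_min` its Jacobson radical; the `k`-th power of the fractional ideal `𝔓_min` is
explicitly `𝔓_min^k = {(x_{ij}) : vF (x_{ij}) ≥ ⌈(k + i - j)/N⌉}`, i.e. (since `vF` is
integer-valued) `{(x_{ij}) : k + i - j ≤ N · vF (x_{ij})}`.  Then for every `k ∈ ℤ`,
`{det γ : γ ∈ 𝔓_min^k} = 𝔭^k = {x : x = 0 ∨ vF x ≥ k}`. -/
theorem statement15
    (F : Type*) [Field F]
    (vF : F → ℤ)
    (hvFmul : ∀ x y : F, x ≠ 0 → y ≠ 0 → vF (x * y) = vF x + vF y)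
    (hvFadd : ∀ x y : F, x ≠ 0 → y ≠ 0 → x + y ≠ 0 → min (vF x) (vF y) ≤ vF (x + y))
    (hvFsurj : ∀ m : ℤ, ∃ x : F, x ≠ 0 ∧ vF x = m)
    (N : ℕ) (hN : 0 < N) (k : ℤ) :
    (fun γ : Matrix (Fin N) (Fin N) F => γ.det) ''
        {γ : Matrix (Fin N) (Fin N) F |
          ∀ i j : Fin N, γ i j = 0 ∨ k + (i : ℤ) - (j : ℤ) ≤ (N : ℤ) * vF (γ i j)}
      = {x : F | x = 0 ∨ k ≤ vF x} := by
  have : NeZero N := NeZero.of_pos hN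
  show det '' iwahoriRadicalPow vF N k = valIdeal vF k
  refine Set.Subset.antisymm ?_ (valIdeal_subset_image_det hvFmul hvFsurj k)
  rintro _ ⟨γ, hγ, rfl⟩
  exact det_mem_valIdeal hvFmul hvFadd hγ
end

section
/- Let F be a field, V an F-vector space of dimension N > 1, 𝔤 = End_F(V), and γ ∈ Aut_F(V) a quasi-regular element, i.e., the centralizer 𝔤_γ equals F[γ] and has dimension N over F. Then det_F(−ad_γ ; 𝔤/𝔤_γ) = det(γ)^{N−1} · det_F(1 − Ad_γ ; 𝔤/𝔤_γ), where ad_γ(x) = γx − xγ, Ad_γ(x) = γxγ^{−1}, and det(γ) = det_F(v ↦ γv; V). -/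
/-!
Since `γ` is invertible, `-ad_γ = R_γ ∘ (1 - Ad_γ)` with `R_γ x = x γ`, and both factors preserve
`𝔤_γ = F[γ]`, so it suffices to show that `R_γ` has determinant `det γ ^ (N - 1)` on `𝔤 / F[γ]`.
On `𝔤 ≅ Mat_N(F)` the map `R_γ` acts on each of the `N` rows by `v ↦ v γ`, so its determinant is
`det γ ^ N`. On `F[γ]` it is multiplication by the generator of a power basis, with determinant
`± (minpoly γ)(0)`; as `dim F[γ] = N`, the minimal polynomial of `γ` is its characteristic
polynomial, so this is `det γ`. Dividing gives `det γ ^ (N - 1)` on the quotient.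
-/

open Module

theorem Matrix.det_mulRight {F n : Type*} [Field F] [Fintype n] [DecidableEq n]
    (A : Matrix n n F) :
    LinearMap.det (LinearMap.mulRight F A) = A.det ^ Fintype.card n := by
  let e : (n → n → F) ≃ₗ[F] Matrix n n F := Matrix.ofLinearEquiv F
  have hrows : LinearMap.mulRight F A = e.toLinearMap ∘ₗ
      LinearMap.pi (fun i ↦ A.vecMulLinear ∘ₗ LinearMap.proj i) ∘ₗ e.symm.toLinearMap := by
    ext X i j
    rfl
  rw [hrows, LinearMap.det_conj, LinearMap.det_pi, ← Matrix.mulVecLin_transpose,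
    ← Matrix.toLin'_apply', LinearMap.det_toLin', Matrix.det_transpose, Finset.prod_const,
    Finset.card_univ]

theorem LinearMap.mulRight_comp_id_sub_mulLeft_comp_mulRight {F A : Type*} [CommSemiring F]
    [Ring A] [Algebra F A] {a b : A} (hba : b * a = 1) :
    mulRight F a ∘ₗ (id - mulLeft F a ∘ₗ mulRight F b) = -(mulLeft F a - mulRight F a) := by
  ext x
  simp [sub_mul, mul_assoc, hba]

namespace Algebra

-- makes `F[a]` a commutative ring, as the power basis API requires
open scoped IsMulCommutative

variable {F S : Type*} [Field F] [Ring S] [Algebra F S]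

theorem adjoin_singleton_mk_eq_top (a : S) :
    adjoin F {(⟨a, self_mem_adjoin_singleton F a⟩ : adjoin F {a})} = ⊤ := by
  convert adjoin_adjoin_coe_preimage (R := F) (s := {a})
  ext x
  simp [Subtype.ext_iff]

theorem minpoly_adjoin_singleton_mk (a : S) :
    minpoly F (⟨a, self_mem_adjoin_singleton F a⟩ : adjoin F {a}) = minpoly F a :=
  (minpoly.algHom_eq (adjoin F {a}).val Subtype.val_injective _).symm

variable [FiniteDimensional F S]

noncomputable def adjoinSingletonPowerBasis (a : S) : PowerBasis F (adjoin F {a}) :=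
  .ofAdjoinEqTop (.of_finite F _) (adjoin_singleton_mk_eq_top a)

theorem finrank_adjoin_singleton (a : S) :
    finrank F (adjoin F {a}) = (minpoly F a).natDegree := by
  rw [(adjoinSingletonPowerBasis a).finrank, adjoinSingletonPowerBasis,
    PowerBasis.ofAdjoinEqTop_dim, minpoly_adjoin_singleton_mk]

theorem det_restrict_mulRight_adjoin_singleton (a : S)
    (h : ∀ x ∈ Subalgebra.toSubmodule (adjoin F {a}),
      LinearMap.mulRight F a x ∈ Subalgebra.toSubmodule (adjoin F {a})) :
    LinearMap.det ((LinearMap.mulRight F a).restrict h)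
      = (-1) ^ (minpoly F a).natDegree * (minpoly F a).coeff 0 := by
  have hnorm :=
    Algebra.PowerBasis.norm_gen_eq_coeff_zero_minpoly (adjoinSingletonPowerBasis (F := F) a)
  rw [adjoinSingletonPowerBasis, PowerBasis.ofAdjoinEqTop_gen, PowerBasis.ofAdjoinEqTop_dim,
    minpoly_adjoin_singleton_mk] at hnorm
  rw [← hnorm, norm_apply]
  congr 1
  ext x
  exact congrArg Subtype.val
    (mul_comm (⟨x, x.2⟩ : adjoin F {a}) ⟨a, self_mem_adjoin_singleton F a⟩)

end Algebra

namespace Module.End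

variable {F V : Type*} [Field F] [AddCommGroup V] [Module F V] [FiniteDimensional F V]

theorem det_mulRight (f : Module.End F V) :
    LinearMap.det (LinearMap.mulRight F f) = LinearMap.det f ^ finrank F V := by
  let E := LinearMap.toMatrixAlgEquiv (finBasis F V)
  have hconj : LinearMap.mulRight F (E f) = E.toLinearEquiv.toLinearMap ∘ₗ
      LinearMap.mulRight F f ∘ₗ E.toLinearEquiv.symm.toLinearMap := by
    ext X : 1
    simp
  rw [← LinearMap.det_conj _ E.toLinearEquiv, ← hconj, Matrix.det_mulRight, Fintype.card_fin]
  exact congrArg (· ^ finrank F V) (LinearMap.det_toMatrix _ f)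

theorem minpoly_eq_charpoly_of_finrank_adjoin (f : Module.End F V)
    (hdim : finrank F (Algebra.adjoin F {f}) = finrank F V) :
    minpoly F f = f.charpoly :=
  .symm <| Polynomial.eq_of_monic_of_dvd_of_natDegree_le (minpoly.monic (.of_finite F f))
    f.charpoly_monic (LinearMap.minpoly_dvd_charpoly f)
    (by rw [LinearMap.charpoly_natDegree, ← hdim, Algebra.finrank_adjoin_singleton])

theorem det_restrict_mulRight_adjoin (f : Module.End F V)
    (hdim : finrank F (Algebra.adjoin F {f}) = finrank F V)
    (h : ∀ x ∈ Subalgebra.toSubmodule (Algebra.adjoin F {f}),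
      LinearMap.mulRight F f x ∈ Subalgebra.toSubmodule (Algebra.adjoin F {f})) :
    LinearMap.det ((LinearMap.mulRight F f).restrict h) = LinearMap.det f := by
  rw [Algebra.det_restrict_mulRight_adjoin_singleton,
    minpoly_eq_charpoly_of_finrank_adjoin f hdim, LinearMap.charpoly_natDegree,
    LinearMap.det_eq_sign_charpoly_coeff]

theorem det_mapQ_mulRight_adjoin {f : Module.End F V} (hf : IsUnit f)
    (hpos : 0 < finrank F V) (hdim : finrank F (Algebra.adjoin F {f}) = finrank F V)
    (h : Subalgebra.toSubmodule (Algebra.adjoin F {f})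
      ≤ (Subalgebra.toSubmodule (Algebra.adjoin F {f})).comap (LinearMap.mulRight F f)) :
    LinearMap.det (Submodule.mapQ _ _ (LinearMap.mulRight F f) h)
      = LinearMap.det f ^ (finrank F V - 1) := by
  have hsplit := LinearMap.det_eq_det_mul_det _ (LinearMap.mulRight F f) h
  rw [det_mulRight, det_restrict_mulRight_adjoin f hdim, ← mul_pow_sub_one hpos.ne'] at hsplit
  exact (mul_left_cancel₀ (LinearMap.isUnit_det f hf).ne_zero hsplit).symm

end Module.End

/-- Let `F` be a field, `V` an `F`-vector space of dimension `N > 1`,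
`𝔤 = End_F(V)`, and `γ ∈ Aut_F(V)` a quasi-regular element, i.e. the centralizer `𝔤_γ`
equals `F[γ]` and has dimension `N` over `F`.  Then
`det_F(-ad_γ ; 𝔤/𝔤_γ) = det(γ)^{N-1} · det_F(1 - Ad_γ ; 𝔤/𝔤_γ)`, where
`ad_γ(x) = γx - xγ`, `Ad_γ(x) = γxγ⁻¹` and `det (γ) = det_F(v ↦ γv ; V)`. -/
theorem statement18
    (F V : Type*) [Field F] [AddCommGroup V] [Module F V] [FiniteDimensional F V]
    (hN : 1 < Module.finrank F V)
    (γ : Module.End F V) (hγ : IsUnit γ)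
    -- `γ` is quasi-regular: `𝔤_γ = F[γ]` and `dim_F 𝔤_γ = N`:
    (hqr : Subalgebra.centralizer F ({γ} : Set (Module.End F V)) = Algebra.adjoin F {γ})
    (hdim : Module.finrank F ↥(Subalgebra.centralizer F ({γ} : Set (Module.End F V)))
      = Module.finrank F V)
    (C : Submodule F (Module.End F V))
    (hC : C = Subalgebra.toSubmodule (Subalgebra.centralizer F ({γ} : Set (Module.End F V))))
    (h₁ : C ≤ C.comap (-(LinearMap.mulLeft F γ - LinearMap.mulRight F γ)))
    (h₂ : C ≤ C.comap
      ((LinearMap.id : Module.End F V →ₗ[F] Module.End F V)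
        - (LinearMap.mulLeft F γ).comp
            (LinearMap.mulRight F ((hγ.unit⁻¹ : (Module.End F V)ˣ) : Module.End F V)))) :
    LinearMap.det
        (Submodule.mapQ C C (-(LinearMap.mulLeft F γ - LinearMap.mulRight F γ)) h₁)
      = (LinearMap.det γ) ^ (Module.finrank F V - 1)
          * LinearMap.det (Submodule.mapQ C C
              ((LinearMap.id : Module.End F V →ₗ[F] Module.End F V)
                - (LinearMap.mulLeft F γ).comp
                    (LinearMap.mulRight F ((hγ.unit⁻¹ : (Module.End F V)ˣ) : Module.End F V)))
              h₂) := by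
  rw [hqr] at hC hdim
  subst hC
  have hR : Subalgebra.toSubmodule (Algebra.adjoin F {γ})
      ≤ (Subalgebra.toSubmodule (Algebra.adjoin F {γ})).comap (LinearMap.mulRight F γ) :=
    fun _ hx ↦ Subalgebra.mul_mem _ hx (Algebra.self_mem_adjoin_singleton F γ)
  rw [← Module.End.det_mapQ_mulRight_adjoin hγ (by omega) hdim hR, ← LinearMap.det_comp,
    ← Submodule.mapQ_comp]
  simp only [LinearMap.mulRight_comp_id_sub_mulLeft_comp_mulRight hγ.val_inv_mul]
end
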